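/- arXiv:2307.03018 — 6 statements merged into one kernel-verified Lean document; each statement's English description precedes it below -/
import Mathlib

section
/- For integers n ≥ m ≥ 1 and 0 ≤ k ≤ n, the number of squarefree monomials of degree k in n variables x_1,...,x_n that are not divisible by any of the monomials x_i x_{i+1} ⋯ x_{i+m-1} (for 1 ≤ i ≤ n-m+1) equals the coefficient of x^k in the polynomial (1 + x + ⋯ + x^{m-1})^{n-k+1}. -/
/-!
Split a `k`-subset of `{1, …, n + 1}` with no `m` consecutive elements at its last gap `n + 1 - r`:
above the gap is a block of length `r < m` (and `r ≤ k`), below it a `(k - r)`-subset of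
`{1, …, n - r}` with the same property, and every such pair glues back. Hence the count `f n k`
obeys `f (n + 1) k = ∑ r < min m (k + 1), f (n - r) (k - r)`, where the number `n - k` of
non-elements drops by one on the right: this is the recursion
`[x^k] P^(N+1) = ∑ r < min m (k + 1), [x^(k-r)] P^N` for `P = 1 + x + ⋯ + x^(m-1)`.
At `n = k` the only candidate `{1, …, k}` counts iff `k < m`, i.e. iff `[x^k] P = 1`.
-/

/-- Coefficient of `x^j` in `(1 + x + ⋯ + x^(m-1))^N`, zero if `N < 0` or `j < 0`. -/
noncomputable def eulerCoeff (N : ℤ) (m : ℕ) (j : ℤ) : ℤ :=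
  if 0 ≤ N ∧ 0 ≤ j then
    (((∑ i ∈ Finset.range m, (Polynomial.X : Polynomial ℤ) ^ i)) ^ N.toNat).coeff j.toNat
  else 0

open Finset Polynomial

section Polynomial

variable {R : Type*} [Semiring R]

theorem coeff_geomSum (m k : ℕ) :
    (∑ i ∈ range m, (X : R[X]) ^ i).coeff k = if k < m then 1 else 0 := by
  simp [coeff_X_pow]

theorem coeff_geomSum_mul (m k : ℕ) (p : R[X]) :
    ((∑ i ∈ range m, X ^ i) * p).coeff k = ∑ r ∈ range (min m (k + 1)), p.coeff (k - r) := by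
  simp only [sum_mul, finsetSum_coeff, coeff_X_pow_mul', ← sum_filter]
  congr 1
  ext r
  simp only [mem_filter, mem_range, lt_min_iff]
  omega

end Polynomial

theorem eulerCoeff_natCast (N m j : ℕ) :
    eulerCoeff N m j = ((∑ i ∈ range m, (X : ℤ[X]) ^ i) ^ N).coeff j := by
  simp [eulerCoeff]

def RunFree (m : ℕ) (A : Finset ℕ) : Prop := ∀ i, ¬ Icc i (i + m - 1) ⊆ A

open Classical in
noncomputable def runFreeSets (m n k : ℕ) : Finset (Finset ℕ) :=
  ((Icc 1 n).powersetCard k).filter (RunFree m)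

variable {m n k : ℕ} {A B : Finset ℕ}

theorem mem_runFreeSets :
    A ∈ runFreeSets m n k ↔ A ⊆ Icc 1 n ∧ #A = k ∧ RunFree m A := by
  classical
  rw [runFreeSets, mem_filter, mem_powersetCard, and_assoc]

theorem RunFree.mono (hA : RunFree m A) (hBA : B ⊆ A) : RunFree m B :=
  fun i hi => hA i (hi.trans hBA)

theorem card_Icc_add_sub_one (hm : 0 < m) (i : ℕ) : #(Icc i (i + m - 1)) = m := by
  rw [Nat.card_Icc]; omega

theorem runFree_Icc_one_iff (hm : 0 < m) : RunFree m (Icc 1 n) ↔ n < m := by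
  constructor
  · intro h
    by_contra! hmn
    exact h 1 (Icc_subset_Icc le_rfl (by omega))
  · intro hn i hi
    have := card_le_card hi
    rw [card_Icc_add_sub_one hm, Nat.card_Icc] at this
    omega

theorem runFree_union_Ioc {t u : ℕ} (hm : 0 < m) (hB : ∀ b ∈ B, b < t) (hu : u < t + m) :
    RunFree m (B ∪ Ioc t u) ↔ RunFree m B := by
  refine ⟨fun h => h.mono subset_union_left, fun h i hi => ?_⟩
  have ht : t ∉ B ∪ Ioc t u := by
    simp only [mem_union, mem_Ioc, lt_irrefl, false_and, or_false]
    exact fun htB => (hB t htB).false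
  rcases lt_or_ge (i + m - 1) t with hlt | hge
  · refine h i fun x hx => ?_
    exact (mem_union.1 (hi hx)).resolve_right (by simp only [mem_Icc, mem_Ioc] at hx ⊢; omega)
  · rcases le_or_gt i t with hle | hgt
    · exact ht (hi (mem_Icc.2 ⟨hle, hge⟩))
    · have hrun : Icc i (i + m - 1) ⊆ Ioc t u := fun x hx => by
        have hxt : t < x := by simp only [mem_Icc] at hx; omega
        exact (mem_union.1 (hi hx)).resolve_left fun hxB => (hB x hxB).not_gt hxt
      have := card_le_card hrun
      rw [card_Icc_add_sub_one hm, Nat.card_Ioc] at this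
      omega

theorem card_runFreeSets_self (hm : 0 < m) :
    #(runFreeSets m n n) = if n < m then 1 else 0 := by
  classical
  have hself : (Icc 1 n).powersetCard n = {Icc 1 n} := by
    simpa using powersetCard_self (Icc 1 n)
  rw [runFreeSets, hself, filter_singleton]
  simp only [runFree_Icc_one_iff hm]
  split_ifs <;> rfl

theorem disjoint_Ioc_of_subset_Icc {a t t' u : ℕ} (hB : B ⊆ Icc a t) (ht : t ≤ t') :
    Disjoint B (Ioc t' u) :=
  disjoint_of_subset_left (hB.trans Icc_subset_Iic_self) (Iic_disjoint_Ioc ht)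

theorem union_Ioc_mem_runFreeSets {r : ℕ} (hm : 0 < m) (hrm : r < m) (hrk : r ≤ k) (hkn : k ≤ n)
    (hB : B ∈ runFreeSets m (n - r) (k - r)) :
    B ∪ Ioc (n - r + 1) (n + 1) ∈ runFreeSets m (n + 1) k := by
  obtain ⟨hBsub, hBcard, hBfree⟩ := mem_runFreeSets.1 hB
  have hBlt : ∀ b ∈ B, b < n - r + 1 := fun b hb => by
    have := hBsub hb
    simp only [mem_Icc] at this
    omega
  refine mem_runFreeSets.2
    ⟨union_subset (hBsub.trans (Icc_subset_Icc le_rfl (by omega))) ?_, ?_, ?_⟩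
  · exact fun x hx => by simp only [mem_Ioc, mem_Icc] at hx ⊢; omega
  · rw [card_union_of_disjoint (disjoint_Ioc_of_subset_Icc hBsub (by omega)), hBcard,
      Nat.card_Ioc]
    omega
  · exact (runFree_union_Ioc hm hBlt (by omega)).2 hBfree

theorem union_Ioc_ne_of_lt {B' : Finset ℕ} {r r' : ℕ} (hB : B ⊆ Icc 1 (n - r)) (hrr' : r < r')
    (hr'n : r' ≤ n) : B ∪ Ioc (n - r + 1) (n + 1) ≠ B' ∪ Ioc (n - r' + 1) (n + 1) := by
  intro h
  have hgap : n - r + 1 ∈ B' ∪ Ioc (n - r' + 1) (n + 1) :=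
    mem_union_right _ (mem_Ioc.2 (by omega))
  rw [← h, mem_union, mem_Ioc] at hgap
  rcases hgap with hgap | hgap
  · have := hB hgap
    simp only [mem_Icc] at this
    omega
  · omega

theorem exists_union_Ioc_eq_of_mem_runFreeSets (hkn : k ≤ n)
    (hA : A ∈ runFreeSets m (n + 1) k) :
    ∃ r ∈ range (min m (k + 1)), ∃ B ∈ runFreeSets m (n - r) (k - r),
      B ∪ Ioc (n - r + 1) (n + 1) = A := by
  classical
  obtain ⟨hAsub, hAcard, hAfree⟩ := mem_runFreeSets.1 hA
  have h0 : 0 ∉ A := fun h => by simpa using hAsub h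
  -- the last gap `n + 1 - r` of `A`; it exists because `0 ∉ A`
  have hex : ∃ r, n + 1 - r ∉ A := ⟨n + 1, by simpa using h0⟩
  set r := Nat.find hex
  have hgap : n + 1 - r ∉ A := Nat.find_spec hex
  have hrun : Ioc (n + 1 - r) (n + 1) ⊆ A := fun x hx => by
    simp only [mem_Ioc] at hx
    have := Nat.find_min hex (m := n + 1 - x) (by omega)
    rwa [not_not, show n + 1 - (n + 1 - x) = x by omega] at this
  have hrn : r ≤ n + 1 := Nat.find_min' hex (by simpa using h0)
  have hrk : r ≤ k := by have := card_le_card hrun; rw [Nat.card_Ioc] at this; omega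
  have hrm : r < m := by
    by_contra! h
    refine hAfree (n + 2 - m) (Subset.trans (fun x hx => ?_) hrun)
    simp only [mem_Icc, mem_Ioc] at hx ⊢
    omega
  have hrun' : Ioc (n - r + 1) (n + 1) ⊆ A := by rwa [show n - r + 1 = n + 1 - r by omega]
  refine ⟨r, mem_range.2 (by omega), A \ Ioc (n - r + 1) (n + 1),
    mem_runFreeSets.2 ⟨?_, ?_, hAfree.mono sdiff_subset⟩, sdiff_union_of_subset hrun'⟩
  · intro x hx
    rw [mem_sdiff] at hx
    have := hAsub hx.1
    have hxg : x ≠ n + 1 - r := fun h => hgap (h ▸ hx.1)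
    simp only [mem_Icc, mem_Ioc] at this hx ⊢
    omega
  · rw [card_sdiff_of_subset hrun', hAcard, Nat.card_Ioc]
    omega

theorem card_runFreeSets_succ (hm : 0 < m) (hkn : k ≤ n) :
    #(runFreeSets m (n + 1) k) =
      ∑ r ∈ range (min m (k + 1)), #(runFreeSets m (n - r) (k - r)) := by
  classical
  have hdecomp : runFreeSets m (n + 1) k = (range (min m (k + 1))).biUnion
      fun r => (runFreeSets m (n - r) (k - r)).image (· ∪ Ioc (n - r + 1) (n + 1)) := by
    ext A
    simp only [mem_biUnion, mem_image, mem_range, lt_min_iff]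
    constructor
    · exact fun hA => by simpa using exists_union_Ioc_eq_of_mem_runFreeSets hkn hA
    · rintro ⟨r, ⟨hrm, hrk⟩, B, hB, rfl⟩
      exact union_Ioc_mem_runFreeSets hm hrm (by omega) hkn hB
  rw [hdecomp, card_biUnion]
  · refine sum_congr rfl fun r _ => card_image_of_injOn fun B hB B' hB' h => ?_
    have hdisj {C : Finset ℕ} (hC : C ∈ runFreeSets m (n - r) (k - r)) :
        Disjoint C (Ioc (n - r + 1) (n + 1)) :=
      disjoint_Ioc_of_subset_Icc (mem_runFreeSets.1 hC).1 (by omega)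
    rw [← union_sdiff_cancel_right (hdisj hB), ← union_sdiff_cancel_right (hdisj hB')]
    exact congrArg (· \ Ioc (n - r + 1) (n + 1)) h
  · intro r hr r' hr' hne
    simp only [coe_range, Set.mem_Iio, lt_min_iff] at hr hr'
    refine disjoint_left.2 fun A hA hA' => ?_
    simp only [mem_image] at hA hA'
    obtain ⟨B, hB, rfl⟩ := hA
    obtain ⟨B', hB', hBB'⟩ := hA'
    rcases hne.lt_or_gt with hlt | hgt
    · exact union_Ioc_ne_of_lt (mem_runFreeSets.1 hB).1 hlt (by omega) hBB'.symm
    · exact union_Ioc_ne_of_lt (mem_runFreeSets.1 hB').1 hgt (by omega) hBB'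

theorem card_runFreeSets_add {R : Type*} [Semiring R] (hm : 0 < m) (N k : ℕ) :
    (#(runFreeSets m (N + k) k) : R) = ((∑ i ∈ range m, (X : R[X]) ^ i) ^ (N + 1)).coeff k := by
  induction N generalizing k with
  | zero =>
    rw [zero_add, zero_add, pow_one, coeff_geomSum, card_runFreeSets_self hm]
    split_ifs <;> simp
  | succ N ih =>
    rw [show N + 1 + k = N + k + 1 by ring, card_runFreeSets_succ hm (by omega), pow_succ',
      coeff_geomSum_mul, Nat.cast_sum]
    refine sum_congr rfl fun r hr => ?_
    rw [mem_range, lt_min_iff] at hr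
    rw [show N + k - r = N + (k - r) by omega, ih]

theorem stmt0_general (n m k : ℕ) (hm : 1 ≤ m) (hk : k ≤ n) :
    (((((Finset.Icc 1 n).powersetCard k).filter
      (fun A => ∀ i ∈ Finset.Icc 1 n, ¬ (Finset.Icc i (i + m - 1) ⊆ A))).card : ℤ))
      = eulerCoeff ((n : ℤ) - k + 1) m k := by
  have hfilter : ((Icc 1 n).powersetCard k).filter
      (fun A => ∀ i ∈ Icc 1 n, ¬ (Icc i (i + m - 1) ⊆ A)) = runFreeSets m n k := by
    classical
    refine filter_congr fun A hA => ⟨fun h i hi => h i ?_ hi, fun h i _ => h i⟩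
    exact (mem_powersetCard.1 hA).1 (hi (left_mem_Icc.2 (by omega)))
  obtain ⟨N, rfl⟩ : ∃ N, n = N + k := ⟨n - k, by omega⟩
  have hexp : ((N + k : ℕ) : ℤ) - k + 1 = ((N + 1 : ℕ) : ℤ) := by push_cast; ring
  rw [hfilter, card_runFreeSets_add hm, hexp, eulerCoeff_natCast]

/-- The number of `k`-subsets of `{1,…,n}` containing no `m` consecutive integers equals the
coefficient of `x^k` in `(1 + x + ⋯ + x^(m-1))^(n-k+1)`. -/
theorem stmt0 (n m k : ℕ) (hm : 1 ≤ m) (hmn : m ≤ n) (hk : k ≤ n) :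
    (((((Finset.Icc 1 n).powersetCard k).filter
      (fun A => ∀ i ∈ Finset.Icc 1 n, ¬ (Finset.Icc i (i + m - 1) ⊆ A))).card : ℤ))
      = eulerCoeff ((n : ℤ) - k + 1) m k :=
  stmt0_general n m k hm hk
end

section
/- Let n ≥ 2 and d = ⌈n/3⌉. Then for all 0 ≤ k ≤ d, ∑_{j=0}^{k} (-1)^{k-j} · binom(d-j, k-j) · binom(n-j+1, j) ≥ 0. -/
/-!
Write `F_n(w) = ∑_j C(n+1-j, j) w^j` for the independence polynomial of the path on `n` vertices,
so that `F_{n+2} = F_{n+1} + w F_n`. For `k ≤ d` the alternating sum is the `k`-th coefficient of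
`G_n = (1 - X)^d F_n(X/(1 - X))` with `d = ⌈n/3⌉`. Since `d` grows by one every three steps, the
recurrence for `F` becomes
`G_{3m+3} = G_{3m+2} + X/(1-X) G_{3m+1}`, `G_{3m+4} = G_{3m+2} + X G_{3m+1}` and
`G_{3m+5} = G_{3m+4} + X G_{3m+3}`, in which every term has nonnegative coefficients; starting
from `G_1 = 1` and `G_2 = 1 + X`, all `G_n` have nonnegative coefficients.
-/

section PathIndependence

open Finset

variable {R : Type*} [CommSemiring R]

def pathIndep (n : ℕ) (w : R) : R :=
  ∑ j ∈ range (n + 1), ((n + 1 - j).choose j : R) * w ^ j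

theorem pathIndep_add_two (n : ℕ) (w : R) :
    pathIndep (n + 2) w = pathIndep (n + 1) w + w * pathIndep n w := by
  set f : ℕ → ℕ → R := fun m j => ((m + 1 - j).choose j : R) * w ^ j
  have pascal : ∀ j < n + 2, f (n + 2) (j + 1) = f (n + 1) (j + 1) + w * f n j := by
    intro j hj
    simp only [f]
    rw [show n + 2 + 1 - (j + 1) = n + 1 - j + 1 by omega, Nat.choose_succ_succ',
      show n + 1 + 1 - (j + 1) = n + 1 - j by omega]
    push_cast
    ring
  have hn : pathIndep n w = ∑ j ∈ range (n + 2), f n j := by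
    simp [pathIndep, f, sum_range_succ _ (n + 1)]
  have hn1 : pathIndep (n + 1) w = ∑ j ∈ range (n + 1), f (n + 1) (j + 1) + f (n + 1) 0 := by
    rw [pathIndep, sum_range_succ']
  have hn2 : pathIndep (n + 2) w = ∑ j ∈ range (n + 2), f (n + 2) (j + 1) + f (n + 2) 0 := by
    rw [pathIndep, sum_range_succ']
  have top : f (n + 1) (n + 1 + 1) = 0 := by simp [f]
  have bottom : f (n + 2) 0 = f (n + 1) 0 := by simp [f]
  rw [hn, hn1, hn2, sum_congr rfl fun j hj => pascal j (mem_range.mp hj), sum_add_distrib,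
    ← mul_sum, sum_range_succ (fun j => f (n + 1) (j + 1)) (n + 1), top, bottom]
  ring

theorem pathIndep_zero (w : R) : pathIndep 0 w = 1 := by
  simp [pathIndep]

theorem pathIndep_one (w : R) : pathIndep 1 w = 1 + w := by
  simp [pathIndep, sum_range_succ]

end PathIndependence

namespace PowerSeries

section OneSubX

variable {R : Type*} [CommRing R]

theorem coeff_one_sub_X_pow (m i : ℕ) :
    coeff i ((1 - X : R⟦X⟧) ^ m) = (-1) ^ i * (m.choose i : R) := by
  induction m generalizing i with
  | zero => cases i <;> simp [coeff_one]
  | succ m ih =>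
    rw [pow_succ, mul_sub, mul_one, map_sub, ih]
    cases i with
    | zero => simp
    | succ i =>
      rw [coeff_succ_mul_X, ih, Nat.choose_succ_succ']
      push_cast
      ring

theorem one_sub_X_mul_X_mul_mk_one : (1 - X : R⟦X⟧) * (X * mk 1) = X := by
  rw [mul_left_comm, mul_comm _ (mk 1), mk_one_mul_one_sub_eq_one, mul_one]

theorem coeff_one_sub_X_pow_mul_X_mul_mk_one_pow {d k : ℕ} (j : ℕ) (hkd : k ≤ d) :
    coeff k ((1 - X : R⟦X⟧) ^ d * (X * mk 1) ^ j) =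
      if j ≤ k then (-1) ^ (k - j) * ((d - j).choose (k - j) : R) else 0 := by
  split_ifs with hjk
  · rw [← Nat.sub_add_cancel (hjk.trans hkd), pow_add, mul_assoc, ← mul_pow,
      one_sub_X_mul_X_mul_mk_one, mul_comm, coeff_X_pow_mul', if_pos hjk, coeff_one_sub_X_pow,
      Nat.add_sub_cancel]
  · rw [mul_pow, mul_left_comm, coeff_X_pow_mul', if_neg hjk]

open Finset in
theorem coeff_one_sub_X_pow_mul_pathIndep {n d k : ℕ} (hkd : k ≤ d) (hkn : k ≤ n) :
    coeff k ((1 - X : R⟦X⟧) ^ d * pathIndep n (X * mk 1)) =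
      ∑ j ∈ range (k + 1), (-1) ^ (k - j) * ((d - j).choose (k - j) : R) *
        ((n - j + 1).choose j : R) := by
  have hsub : range (k + 1) ⊆ range (n + 1) := range_subset_range.mpr (by omega)
  rw [pathIndep, mul_sum, map_sum, ← sum_subset hsub]
  · refine sum_congr rfl fun j hj => ?_
    have hjk : j ≤ k := Nat.lt_succ_iff.mp (mem_range.mp hj)
    rw [mul_left_comm, ← map_natCast (C (R := R)), coeff_C_mul,
      coeff_one_sub_X_pow_mul_X_mul_mk_one_pow j hkd, if_pos hjk, Nat.sub_add_comm (by omega)]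
    ring
  · intro j _ hj
    have hjk : ¬ j ≤ k := fun h => hj (mem_range.mpr (Nat.lt_succ_of_le h))
    rw [mul_left_comm, ← map_natCast (C (R := R)), coeff_C_mul,
      coeff_one_sub_X_pow_mul_X_mul_mk_one_pow j hkd, if_neg hjk, mul_zero]

variable (e n : ℕ)

theorem one_sub_X_pow_succ_mul_pathIndep_add_two :
    (1 - X : R⟦X⟧) ^ (e + 1) * pathIndep (n + 2) (X * mk 1) =
      (1 - X) ^ (e + 1) * pathIndep (n + 1) (X * mk 1) +
        X * ((1 - X) ^ e * pathIndep n (X * mk 1)) := by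
  rw [pathIndep_add_two]
  linear_combination (1 - X : R⟦X⟧) ^ e * pathIndep n (X * mk 1) *
    one_sub_X_mul_X_mul_mk_one (R := R)

theorem one_sub_X_pow_succ_mul_pathIndep_add_three :
    (1 - X : R⟦X⟧) ^ (e + 1) * pathIndep (n + 3) (X * mk 1) =
      (1 - X) ^ e * pathIndep (n + 1) (X * mk 1) +
        X * ((1 - X) ^ e * pathIndep n (X * mk 1)) := by
  rw [one_sub_X_pow_succ_mul_pathIndep_add_two, pathIndep_add_two]
  linear_combination (1 - X : R⟦X⟧) ^ e * pathIndep n (X * mk 1) *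
    one_sub_X_mul_X_mul_mk_one (R := R)

end OneSubX

noncomputable def natCoeffs : Subsemiring ℤ⟦X⟧ := (map (Nat.castRingHom ℤ)).rangeS

theorem coeff_nonneg_of_mem_natCoeffs {f : ℤ⟦X⟧} (hf : f ∈ natCoeffs) (k : ℕ) :
    0 ≤ coeff k f := by
  obtain ⟨g, rfl⟩ := hf
  simp

theorem X_mem_natCoeffs : X ∈ natCoeffs := ⟨X, map_X _⟩

theorem X_mul_mk_one_mem_natCoeffs : X * mk 1 ∈ natCoeffs :=
  ⟨X * mk 1, by rw [map_mul, map_X]; congr 1⟩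

end PowerSeries

open PowerSeries

/-- The series `G_n` of the header; `X * mk 1` is `X / (1 - X)` and `(n + 2) / 3 = ⌈n/3⌉`. -/
noncomputable def pathDepthSeries (n : ℕ) : ℤ⟦X⟧ :=
  (1 - X) ^ ((n + 2) / 3) * pathIndep n (X * mk 1)

theorem pathDepthSeries_zero : pathDepthSeries 0 = 1 := by
  rw [pathDepthSeries, pathIndep_zero, pow_zero, one_mul]

theorem pathDepthSeries_one : pathDepthSeries 1 = 1 := by
  rw [pathDepthSeries, pathIndep_one, show (1 + 2) / 3 = 1 from rfl, pow_one]
  linear_combination one_sub_X_mul_X_mul_mk_one (R := ℤ)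

theorem pathDepthSeries_two : pathDepthSeries 2 = 1 + X := by
  rw [pathDepthSeries, pathIndep_add_two 0, pathIndep_one, pathIndep_zero,
    show (2 + 2) / 3 = 1 from rfl, pow_one]
  linear_combination 2 * one_sub_X_mul_X_mul_mk_one (R := ℤ)

theorem pathDepthSeries_three_mul_add_three (m : ℕ) :
    pathDepthSeries (3 * m + 3) =
      pathDepthSeries (3 * m + 2) + X * mk 1 * pathDepthSeries (3 * m + 1) := by
  unfold pathDepthSeries
  rw [show (3 * m + 3 + 2) / 3 = m + 1 by omega, show (3 * m + 2 + 2) / 3 = m + 1 by omega,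
    show (3 * m + 1 + 2) / 3 = m + 1 by omega, pathIndep_add_two]
  ring

theorem pathDepthSeries_three_mul_add_four (m : ℕ) :
    pathDepthSeries (3 * m + 4) =
      pathDepthSeries (3 * m + 2) + X * pathDepthSeries (3 * m + 1) := by
  unfold pathDepthSeries
  rw [show (3 * m + 4 + 2) / 3 = m + 1 + 1 by omega, show (3 * m + 2 + 2) / 3 = m + 1 by omega,
    show (3 * m + 1 + 2) / 3 = m + 1 by omega]
  exact one_sub_X_pow_succ_mul_pathIndep_add_three _ _

theorem pathDepthSeries_three_mul_add_five (m : ℕ) :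
    pathDepthSeries (3 * m + 5) =
      pathDepthSeries (3 * m + 4) + X * pathDepthSeries (3 * m + 3) := by
  unfold pathDepthSeries
  rw [show (3 * m + 5 + 2) / 3 = m + 1 + 1 by omega,
    show (3 * m + 4 + 2) / 3 = m + 1 + 1 by omega, show (3 * m + 3 + 2) / 3 = m + 1 by omega]
  exact one_sub_X_pow_succ_mul_pathIndep_add_two _ _

theorem pathDepthSeries_three_mul_add_three_mem {m : ℕ}
    (h1 : pathDepthSeries (3 * m + 1) ∈ natCoeffs) (h2 : pathDepthSeries (3 * m + 2) ∈ natCoeffs) :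
    pathDepthSeries (3 * m + 3) ∈ natCoeffs := by
  rw [pathDepthSeries_three_mul_add_three]
  exact add_mem h2 (mul_mem X_mul_mk_one_mem_natCoeffs h1)

theorem pathDepthSeries_three_mul_add_one_mem_and_add_two_mem (m : ℕ) :
    pathDepthSeries (3 * m + 1) ∈ natCoeffs ∧ pathDepthSeries (3 * m + 2) ∈ natCoeffs := by
  induction m with
  | zero =>
    rw [pathDepthSeries_one, pathDepthSeries_two]
    exact ⟨one_mem _, add_mem (one_mem _) X_mem_natCoeffs⟩
  | succ m ih =>
    obtain ⟨h1, h2⟩ := ih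
    have h4 : pathDepthSeries (3 * m + 4) ∈ natCoeffs := by
      rw [pathDepthSeries_three_mul_add_four]
      exact add_mem h2 (mul_mem X_mem_natCoeffs h1)
    have h5 : pathDepthSeries (3 * m + 5) ∈ natCoeffs := by
      rw [pathDepthSeries_three_mul_add_five]
      exact add_mem h4 (mul_mem X_mem_natCoeffs (pathDepthSeries_three_mul_add_three_mem h1 h2))
    exact ⟨h4, h5⟩

theorem pathDepthSeries_mem_natCoeffs (n : ℕ) : pathDepthSeries n ∈ natCoeffs := by
  have hstep := pathDepthSeries_three_mul_add_one_mem_and_add_two_mem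
  obtain ⟨m, rfl | rfl | rfl⟩ : ∃ m, n = 3 * m ∨ n = 3 * m + 1 ∨ n = 3 * m + 2 :=
    ⟨n / 3, by omega⟩
  · cases m with
    | zero => rw [Nat.mul_zero, pathDepthSeries_zero]; exact one_mem _
    | succ m =>
      rw [Nat.mul_succ]
      exact pathDepthSeries_three_mul_add_three_mem (hstep m).1 (hstep m).2
  · exact (hstep m).1
  · exact (hstep m).2

theorem stmt7_general (n d k : ℕ) (hd : d = (n + 2) / 3) (hk : k ≤ d) :
    0 ≤ ∑ j ∈ Finset.range (k + 1),
        (-1 : ℤ) ^ (k - j) * ((d - j).choose (k - j) : ℤ) * ((n - j + 1).choose j : ℤ) := by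
  rw [← coeff_one_sub_X_pow_mul_pathIndep hk (by omega), hd]
  exact coeff_nonneg_of_mem_natCoeffs (pathDepthSeries_mem_natCoeffs n) k

theorem stmt7 (n d k : ℕ) (hn : 2 ≤ n) (hd : d = (n + 2) / 3) (hk : k ≤ d) :
    0 ≤ ∑ j ∈ Finset.range (k + 1),
        (-1 : ℤ) ^ (k - j) * ((d - j).choose (k - j) : ℤ) * ((n - j + 1).choose j : ℤ) :=
  stmt7_general n d k hd hk
end

section
/- Let n ≥ 2 and d = ⌈n/3⌉. Then for all 0 ≤ k ≤ d+1, ∑_{j=0}^{k} (-1)^{k-j} · binom(d+1-j, k-j) · binom(n-j+1, j) ≤ binom(⌊2n/3⌋ + k - 2, k). -/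
open Finset

def Sfun (n D k : ℕ) : ℤ :=
  ∑ j ∈ Finset.range (k + 1),
    (-1 : ℤ) ^ (k - j) * ((D + 1 - j).choose (k - j) : ℤ) * ((n - j + 1).choose j : ℤ)

lemma Sfun_zero (n D : ℕ) : Sfun n D 0 = 1 := by
  simp [Sfun]

lemma Sfun_rec (n D k : ℕ) :
    Sfun (n+3) (D+1) (k+1) = Sfun (n+2) (D+1) (k+1) + Sfun (n+1) D k := by
  have key : ∀ i : ℕ, (((n+3) - (i+1) + 1).choose (i+1) : ℤ)
      = (((n+2) - (i+1) + 1).choose (i+1) : ℤ) + (((n+1) - i + 1).choose i : ℤ) := by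
    intro i
    rcases le_or_gt i (n+1) with h | h
    · have e1 : (n+3) - (i+1) + 1 = ((n+2) - (i+1) + 1) + 1 := by omega
      have e2 : (n+1) - i + 1 = (n+2) - (i+1) + 1 := by omega
      rw [e1, e2, Nat.choose_succ_succ]
      push_cast
      ring
    · have h1 : ((n+3) - (i+1) + 1).choose (i+1) = 0 :=
        Nat.choose_eq_zero_of_lt (by omega)
      have h2 : ((n+2) - (i+1) + 1).choose (i+1) = 0 :=
        Nat.choose_eq_zero_of_lt (by omega)
      have h3 : ((n+1) - i + 1).choose i = 0 :=
        Nat.choose_eq_zero_of_lt (by omega)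
      rw [h1, h2, h3]
      norm_num
  have L : Sfun (n+3) (D+1) (k+1)
      = (∑ i ∈ Finset.range (k+1),
          (-1 : ℤ) ^ (k+1-(i+1)) * (((D+1) + 1 - (i+1)).choose (k+1-(i+1)) : ℤ)
            * (((n+3) - (i+1) + 1).choose (i+1) : ℤ))
        + (-1 : ℤ) ^ (k+1-0) * (((D+1) + 1 - 0).choose (k+1-0) : ℤ)
            * (((n+3) - 0 + 1).choose 0 : ℤ) := by
    unfold Sfun
    exact Finset.sum_range_succ' _ (k+1)
  have R : Sfun (n+2) (D+1) (k+1)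
      = (∑ i ∈ Finset.range (k+1),
          (-1 : ℤ) ^ (k+1-(i+1)) * (((D+1) + 1 - (i+1)).choose (k+1-(i+1)) : ℤ)
            * (((n+2) - (i+1) + 1).choose (i+1) : ℤ))
        + (-1 : ℤ) ^ (k+1-0) * (((D+1) + 1 - 0).choose (k+1-0) : ℤ)
            * (((n+2) - 0 + 1).choose 0 : ℤ) := by
    unfold Sfun
    exact Finset.sum_range_succ' _ (k+1)
  rw [L, R]
  have hsum : (∑ i ∈ Finset.range (k+1),
          (-1 : ℤ) ^ (k+1-(i+1)) * (((D+1) + 1 - (i+1)).choose (k+1-(i+1)) : ℤ)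
            * (((n+3) - (i+1) + 1).choose (i+1) : ℤ))
      = (∑ i ∈ Finset.range (k+1),
          ((-1 : ℤ) ^ (k+1-(i+1)) * (((D+1) + 1 - (i+1)).choose (k+1-(i+1)) : ℤ)
            * (((n+2) - (i+1) + 1).choose (i+1) : ℤ)
          + (-1 : ℤ) ^ (k-i) * ((D + 1 - i).choose (k-i) : ℤ)
            * (((n+1) - i + 1).choose i : ℤ))) := by
    refine Finset.sum_congr rfl (fun i _ => ?_)
    have e1 : k+1-(i+1) = k - i := by omega
    have e2 : (D+1) + 1 - (i+1) = D + 1 - i := by omega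
    rw [key i, e1, e2]
    ring
  rw [hsum, Finset.sum_add_distrib]
  unfold Sfun
  have hc : (((n+3) - 0 + 1).choose 0 : ℤ) = (((n+2) - 0 + 1).choose 0 : ℤ) := by
    simp
  rw [hc]
  ring

lemma Sfun_shift (n D k : ℕ) (h : k ≤ D + 1) :
    Sfun n (D+1) (k+1) = Sfun n D (k+1) - Sfun n D k := by
  have L : Sfun n (D+1) (k+1)
      = (∑ j ∈ Finset.range (k+1),
          (-1 : ℤ) ^ (k+1-j) * (((D+1) + 1 - j).choose (k+1-j) : ℤ)
            * ((n - j + 1).choose j : ℤ))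
        + (-1 : ℤ) ^ (k+1-(k+1)) * (((D+1) + 1 - (k+1)).choose (k+1-(k+1)) : ℤ)
            * ((n - (k+1) + 1).choose (k+1) : ℤ) := by
    unfold Sfun
    exact Finset.sum_range_succ _ (k+1)
  have R : Sfun n D (k+1)
      = (∑ j ∈ Finset.range (k+1),
          (-1 : ℤ) ^ (k+1-j) * ((D + 1 - j).choose (k+1-j) : ℤ)
            * ((n - j + 1).choose j : ℤ))
        + (-1 : ℤ) ^ (k+1-(k+1)) * ((D + 1 - (k+1)).choose (k+1-(k+1)) : ℤ)
            * ((n - (k+1) + 1).choose (k+1) : ℤ) := by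
    unfold Sfun
    exact Finset.sum_range_succ _ (k+1)
  rw [L, R]
  have hLast : ((((D+1) + 1 - (k+1)).choose (k+1-(k+1))) : ℤ)
      = (((D + 1 - (k+1)).choose (k+1-(k+1))) : ℤ) := by
    simp [Nat.sub_self]
  have hsum : (∑ j ∈ Finset.range (k+1),
          (-1 : ℤ) ^ (k+1-j) * (((D+1) + 1 - j).choose (k+1-j) : ℤ)
            * ((n - j + 1).choose j : ℤ))
      = (∑ j ∈ Finset.range (k+1),
          ((-1 : ℤ) ^ (k+1-j) * ((D + 1 - j).choose (k+1-j) : ℤ)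
            * ((n - j + 1).choose j : ℤ)
          - (-1 : ℤ) ^ (k-j) * ((D + 1 - j).choose (k-j) : ℤ)
            * ((n - j + 1).choose j : ℤ))) := by
    refine Finset.sum_congr rfl (fun j hj => ?_)
    simp only [Finset.mem_range] at hj
    have hjk : j ≤ k := by omega
    have e1 : (D+1) + 1 - j = (D + 1 - j) + 1 := by omega
    have e2 : k + 1 - j = (k - j) + 1 := by omega
    have e3 : (-1 : ℤ) ^ ((k-j) + 1) = -(-1 : ℤ) ^ (k-j) := by
      rw [pow_succ]; ring
    rw [e1, e2, Nat.choose_succ_succ, e3]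
    push_cast
    ring
  rw [hsum, Finset.sum_sub_distrib, hLast]
  unfold Sfun
  ring

lemma Sfun_hockey (n D : ℕ) : ∀ K, K ≤ D + 2 →
    Sfun n D K = ∑ i ∈ Finset.range (K+1), Sfun n (D+1) i := by
  intro K
  induction K with
  | zero => intro _; simp [Sfun_zero]
  | succ K ih =>
    intro hK
    rw [Finset.sum_range_succ, ← ih (by omega), Sfun_shift n D K (by omega)]
    ring

lemma Sfun_high (n D k : ℕ) (h : D + 2 ≤ k) :
    Sfun n D k = ((n - k + 1).choose k : ℤ) := by
  unfold Sfun
  rw [Finset.sum_range_succ]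
  have h1 : ∀ j ∈ Finset.range k,
      (-1:ℤ)^(k-j) * ((D+1-j).choose (k-j) : ℤ) * ((n-j+1).choose j : ℤ) = 0 := by
    intro j hj
    simp only [Finset.mem_range] at hj
    have : (D+1-j).choose (k-j) = 0 := Nat.choose_eq_zero_of_lt (by omega)
    simp [this]
  rw [Finset.sum_eq_zero h1]
  simp

lemma Sfun_high_le (n D k : ℕ) (h : D + 2 ≤ k) :
    Sfun n D k ≤ ((n + k - (D+2)).choose k : ℤ) := by
  rw [Sfun_high n D k h]
  have hle : (n - k + 1).choose k ≤ (n + k - (D+2)).choose k := by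
    rcases le_or_gt k n with hkn | hkn
    · exact Nat.choose_le_choose k (by omega)
    · have : (n - k + 1).choose k = 0 := Nat.choose_eq_zero_of_lt (by omega)
      simp [this]
  exact_mod_cast hle

lemma choose_add_le (x y z k : ℕ) (hx : x + 1 ≤ z) (hy : y + 1 ≤ z) :
    x.choose (k+1) + y.choose k ≤ z.choose (k+1) := by
  have h1 : x.choose (k+1) ≤ (z-1).choose (k+1) := Nat.choose_le_choose _ (by omega)
  have h2 : y.choose k ≤ (z-1).choose k := Nat.choose_le_choose _ (by omega)
  have h3 : z.choose (k+1) = (z-1).choose k + (z-1).choose (k+1) := by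
    calc z.choose (k+1) = ((z-1)+1).choose (k+1) := by rw [show z - 1 + 1 = z from by omega]
      _ = (z-1).choose k + (z-1).choose (k+1) := Nat.choose_succ_succ _ _
  omega

lemma sum_choose_diag (r : ℕ) : ∀ K, ∑ i ∈ Finset.range (K+1), (r + i).choose i = (r + K + 1).choose K := by
  intro K
  induction K with
  | zero => simp
  | succ K ih =>
    rw [Finset.sum_range_succ, ih]
    have e2 : r + (K+1) = r + K + 1 := by ring
    rw [e2]
    exact (Nat.choose_succ_succ (r+K+1) K).symm

def UQ (n : ℕ) : Prop :=
  ∀ k, Sfun n ((n+2)/3) k ≤ (((n + k) - ((n+2)/3 + 2)).choose k : ℤ)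

def UP (n : ℕ) : Prop :=
  ∀ k, Sfun n ((n+2)/3 + 1) k ≤ (((n + k) - ((n+2)/3 + 1 + 2)).choose k : ℤ)

lemma base_reduce (m D : ℕ)
    (hsmall : ∀ k ≤ D + 1, Sfun m D k ≤ ((m + k - (D+2)).choose k : ℤ)) :
    ∀ k, Sfun m D k ≤ ((m + k - (D+2)).choose k : ℤ) := by
  intro k
  rcases le_or_gt k (D+1) with h | h
  · exact hsmall k h
  · exact Sfun_high_le m D k (by omega)

lemma UQ_of_checks (m : ℕ)
    (hsmall : ∀ k ≤ (m+2)/3 + 1,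
      Sfun m ((m+2)/3) k ≤ (((m + k) - ((m+2)/3 + 2)).choose k : ℤ)) : UQ m := by
  unfold UQ
  intro k
  rcases le_or_gt k ((m+2)/3 + 1) with h | h
  · exact hsmall k h
  · exact Sfun_high_le m _ k (by omega)

lemma UP_of_checks (m : ℕ)
    (hsmall : ∀ k ≤ (m+2)/3 + 2,
      Sfun m ((m+2)/3 + 1) k ≤ (((m + k) - ((m+2)/3 + 1 + 2)).choose k : ℤ)) : UP m := by
  unfold UP
  intro k
  rcases le_or_gt k ((m+2)/3 + 2) with h | h
  · exact hsmall k h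
  · exact Sfun_high_le m _ k (by omega)

lemma stepQ2 (s : ℕ) (h1 : UQ (3*s+7)) (h0 : UQ (3*s+6)) : UQ (3*s+8) := by
  unfold UQ at h1 h0 ⊢
  intro k
  rw [show (3*s+8+2)/3 = s+3 from by omega]
  rcases k with _ | k'
  · simp [Sfun_zero]
  · rw [show (3*s+8 + (k'+1)) - (s+3+2) = 2*s+k'+4 from by omega]
    have hrec := Sfun_rec (3*s+5) (s+2) k'
    simp only [show 3*s+5+3 = 3*s+8 from by ring, show 3*s+5+2 = 3*s+7 from by ring,
      show 3*s+5+1 = 3*s+6 from by ring, show s+2+1 = s+3 from by ring] at hrec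
    rw [hrec]
    have h1' := h1 (k'+1)
    rw [show (3*s+7+2)/3 = s+3 from by omega,
        show (3*s+7 + (k'+1)) - (s+3+2) = 2*s+k'+3 from by omega] at h1'
    have h0' := h0 k'
    rw [show (3*s+6+2)/3 = s+2 from by omega,
        show (3*s+6 + k') - (s+2+2) = 2*s+k'+2 from by omega] at h0'
    calc Sfun (3*s+7) (s+3) (k'+1) + Sfun (3*s+6) (s+2) k'
        ≤ ((2*s+k'+3).choose (k'+1) : ℤ) + ((2*s+k'+2).choose k' : ℤ) :=
          add_le_add h1' h0'
      _ ≤ ((2*s+k'+4).choose (k'+1) : ℤ) := by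
          exact_mod_cast choose_add_le _ _ _ k' (by omega) (by omega)

lemma stepP2 (s : ℕ) (h6 : UP (3*s+6)) (h5 : UP (3*s+5)) : UP (3*s+8) := by
  unfold UP at h6 h5 ⊢
  intro k
  rw [show (3*s+8+2)/3 + 1 = s+4 from by omega]
  rcases k with _ | k'
  · simp [Sfun_zero]
  · rw [show (3*s+8 + (k'+1)) - (s+4+2) = 2*s+k'+3 from by omega]
    rcases le_or_gt k' (s+4) with hk | hk
    · have E1 := Sfun_rec (3*s+5) (s+3) k'
      simp only [show 3*s+5+3 = 3*s+8 from by ring, show 3*s+5+2 = 3*s+7 from by ring,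
        show 3*s+5+1 = 3*s+6 from by ring, show s+3+1 = s+4 from by ring] at E1
      have E2 := Sfun_rec (3*s+4) (s+3) k'
      simp only [show 3*s+4+3 = 3*s+7 from by ring, show 3*s+4+2 = 3*s+6 from by ring,
        show 3*s+4+1 = 3*s+5 from by ring, show s+3+1 = s+4 from by ring] at E2
      have E3 := Sfun_shift (3*s+6) (s+3) k' (by omega)
      rw [show s+3+1 = s+4 from by ring] at E3
      have hcomb : Sfun (3*s+8) (s+4) (k'+1)
          = Sfun (3*s+6) (s+3) (k'+1) + Sfun (3*s+5) (s+3) k' := by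
        rw [E1, E2, E3]; ring
      rw [hcomb]
      have h6' := h6 (k'+1)
      rw [show (3*s+6 + (k'+1)) - ((3*s+6+2)/3 + 1 + 2) = 2*s+k'+2 from by omega,
          show (3*s+6+2)/3 + 1 = s+3 from by omega] at h6'
      have h5' := h5 k'
      rw [show (3*s+5 + k') - ((3*s+5+2)/3 + 1 + 2) = 2*s+k' from by omega,
          show (3*s+5+2)/3 + 1 = s+3 from by omega] at h5'
      calc Sfun (3*s+6) (s+3) (k'+1) + Sfun (3*s+5) (s+3) k'
          ≤ ((2*s+k'+2).choose (k'+1) : ℤ) + ((2*s+k').choose k' : ℤ) :=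
            add_le_add h6' h5'
        _ ≤ ((2*s+k'+3).choose (k'+1) : ℤ) := by
            exact_mod_cast choose_add_le _ _ _ k' (by omega) (by omega)
    · have := Sfun_high_le (3*s+8) (s+4) (k'+1) (by omega)
      rw [show (3*s+8 + (k'+1)) - (s+4+2) = 2*s+k'+3 from by omega] at this
      exact this

lemma stepQ0 (s : ℕ) (h8 : UQ (3*s+8)) (h7 : UQ (3*s+7)) : UQ (3*s+9) := by
  unfold UQ at h8 h7 ⊢
  intro k
  rw [show (3*s+9+2)/3 = s+3 from by omega]
  rcases k with _ | k'
  · simp [Sfun_zero]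
  · rw [show (3*s+9 + (k'+1)) - (s+3+2) = 2*s+k'+5 from by omega]
    rcases le_or_gt k' (s+4) with hk | hk
    · have hrec := Sfun_rec (3*s+6) (s+2) k'
      simp only [show 3*s+6+3 = 3*s+9 from by ring, show 3*s+6+2 = 3*s+8 from by ring,
        show 3*s+6+1 = 3*s+7 from by ring, show s+2+1 = s+3 from by ring] at hrec
      rw [hrec]
      have hhock := Sfun_hockey (3*s+7) (s+2) k' (by omega)
      rw [show s+2+1 = s+3 from by ring] at hhock
      have hsumle : Sfun (3*s+7) (s+2) k' ≤ ((2*s+k'+3).choose k' : ℤ) := by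
        rw [hhock]
        have step1 : ∀ i ∈ Finset.range (k'+1),
            Sfun (3*s+7) (s+3) i ≤ (((2*s+2+i).choose i : ℕ) : ℤ) := by
          intro i _
          have h7' := h7 i
          rw [show (3*s+7+2)/3 = s+3 from by omega,
              show (3*s+7 + i) - (s+3+2) = 2*s+2+i from by omega] at h7'
          exact h7'
        calc (∑ i ∈ Finset.range (k'+1), Sfun (3*s+7) (s+3) i)
            ≤ ∑ i ∈ Finset.range (k'+1), (((2*s+2+i).choose i : ℕ) : ℤ) :=
              Finset.sum_le_sum step1
          _ = (((∑ i ∈ Finset.range (k'+1), (2*s+2+i).choose i : ℕ)) : ℤ) := by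
              push_cast; ring
          _ = ((2*s+k'+3).choose k' : ℤ) := by
              rw [sum_choose_diag (2*s+2) k']
              norm_num
              congr 1
              omega
      have h8' := h8 (k'+1)
      rw [show (3*s+8+2)/3 = s+3 from by omega,
          show (3*s+8 + (k'+1)) - (s+3+2) = 2*s+k'+4 from by omega] at h8'
      calc Sfun (3*s+8) (s+3) (k'+1) + Sfun (3*s+7) (s+2) k'
          ≤ ((2*s+k'+4).choose (k'+1) : ℤ) + ((2*s+k'+3).choose k' : ℤ) :=
            add_le_add h8' hsumle
        _ ≤ ((2*s+k'+5).choose (k'+1) : ℤ) := by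
            exact_mod_cast choose_add_le _ _ _ k' (by omega) (by omega)
    · have := Sfun_high_le (3*s+9) (s+3) (k'+1) (by omega)
      rw [show (3*s+9 + (k'+1)) - (s+3+2) = 2*s+k'+5 from by omega] at this
      exact this

lemma stepP0 (s : ℕ) (h8 : UP (3*s+8)) (h7 : UQ (3*s+7)) : UP (3*s+9) := by
  unfold UP at h8 ⊢
  unfold UQ at h7
  intro k
  rw [show (3*s+9+2)/3 + 1 = s+4 from by omega]
  rcases k with _ | k'
  · simp [Sfun_zero]
  · rw [show (3*s+9 + (k'+1)) - (s+4+2) = 2*s+k'+4 from by omega]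
    have hrec := Sfun_rec (3*s+6) (s+3) k'
    simp only [show 3*s+6+3 = 3*s+9 from by ring, show 3*s+6+2 = 3*s+8 from by ring,
      show 3*s+6+1 = 3*s+7 from by ring, show s+3+1 = s+4 from by ring] at hrec
    rw [hrec]
    have h8' := h8 (k'+1)
    rw [show (3*s+8 + (k'+1)) - ((3*s+8+2)/3 + 1 + 2) = 2*s+k'+3 from by omega,
        show (3*s+8+2)/3 + 1 = s+4 from by omega] at h8'
    have h7' := h7 k'
    rw [show (3*s+7+2)/3 = s+3 from by omega,
        show (3*s+7 + k') - (s+3+2) = 2*s+k'+2 from by omega] at h7'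
    calc Sfun (3*s+8) (s+4) (k'+1) + Sfun (3*s+7) (s+3) k'
        ≤ ((2*s+k'+3).choose (k'+1) : ℤ) + ((2*s+k'+2).choose k' : ℤ) :=
          add_le_add h8' h7'
      _ ≤ ((2*s+k'+4).choose (k'+1) : ℤ) := by
          exact_mod_cast choose_add_le _ _ _ k' (by omega) (by omega)

lemma stepQ1 (s : ℕ) (h9 : UP (3*s+9)) (h8 : UQ (3*s+8)) : UQ (3*s+10) := by
  unfold UP at h9
  unfold UQ at h8 ⊢
  intro k
  rw [show (3*s+10+2)/3 = s+4 from by omega]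
  rcases k with _ | k'
  · simp [Sfun_zero]
  · rw [show (3*s+10 + (k'+1)) - (s+4+2) = 2*s+k'+5 from by omega]
    have hrec := Sfun_rec (3*s+7) (s+3) k'
    simp only [show 3*s+7+3 = 3*s+10 from by ring, show 3*s+7+2 = 3*s+9 from by ring,
      show 3*s+7+1 = 3*s+8 from by ring, show s+3+1 = s+4 from by ring] at hrec
    rw [hrec]
    have h9' := h9 (k'+1)
    rw [show (3*s+9 + (k'+1)) - ((3*s+9+2)/3 + 1 + 2) = 2*s+k'+4 from by omega,
        show (3*s+9+2)/3 + 1 = s+4 from by omega] at h9'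
    have h8' := h8 k'
    rw [show (3*s+8+2)/3 = s+3 from by omega,
        show (3*s+8 + k') - (s+3+2) = 2*s+k'+3 from by omega] at h8'
    calc Sfun (3*s+9) (s+4) (k'+1) + Sfun (3*s+8) (s+3) k'
        ≤ ((2*s+k'+4).choose (k'+1) : ℤ) + ((2*s+k'+3).choose k' : ℤ) :=
          add_le_add h9' h8'
      _ ≤ ((2*s+k'+5).choose (k'+1) : ℤ) := by
          exact_mod_cast choose_add_le _ _ _ k' (by omega) (by omega)

lemma main_claims : ∀ n : ℕ, (2 ≤ n → UQ n) ∧ (5 ≤ n ∧ n % 3 ≠ 1 → UP n) := by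
  intro n
  induction n using Nat.strong_induction_on with
  | _ n ih =>
  rcases lt_or_ge n 8 with h8 | h8
  · interval_cases n
    · exact ⟨fun h => absurd h (by omega), fun h => absurd h.1 (by omega)⟩
    · exact ⟨fun h => absurd h (by omega), fun h => absurd h.1 (by omega)⟩
    · exact ⟨fun _ => UQ_of_checks 2 (by decide), fun h => absurd h.1 (by omega)⟩
    · exact ⟨fun _ => UQ_of_checks 3 (by decide), fun h => absurd h.1 (by omega)⟩
    · exact ⟨fun _ => UQ_of_checks 4 (by decide), fun h => absurd h.1 (by omega)⟩
    · exact ⟨fun _ => UQ_of_checks 5 (by decide), fun _ => UP_of_checks 5 (by decide)⟩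
    · exact ⟨fun _ => UQ_of_checks 6 (by decide), fun _ => UP_of_checks 6 (by decide)⟩
    · exact ⟨fun _ => UQ_of_checks 7 (by decide), fun h => absurd h.2 (by omega)⟩
  · obtain ⟨s, hs⟩ : ∃ s, n = 3*s+8 ∨ n = 3*s+9 ∨ n = 3*s+10 := ⟨(n-8)/3, by omega⟩
    rcases hs with rfl | rfl | rfl
    · refine ⟨fun _ => stepQ2 s ?_ ?_, fun _ => stepP2 s ?_ ?_⟩
      · exact (ih (3*s+7) (by omega)).1 (by omega)
      · exact (ih (3*s+6) (by omega)).1 (by omega)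
      · exact (ih (3*s+6) (by omega)).2 ⟨by omega, by omega⟩
      · exact (ih (3*s+5) (by omega)).2 ⟨by omega, by omega⟩
    · refine ⟨fun _ => stepQ0 s ?_ ?_, fun _ => stepP0 s ?_ ?_⟩
      · exact (ih (3*s+8) (by omega)).1 (by omega)
      · exact (ih (3*s+7) (by omega)).1 (by omega)
      · exact (ih (3*s+8) (by omega)).2 ⟨by omega, by omega⟩
      · exact (ih (3*s+7) (by omega)).1 (by omega)
    · refine ⟨fun _ => stepQ1 s ?_ ?_, fun h => absurd h.2 (by omega)⟩
      · exact (ih (3*s+9) (by omega)).2 ⟨by omega, by omega⟩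
      · exact (ih (3*s+8) (by omega)).1 (by omega)

theorem stmt8 (n d k : ℕ) (hn : 2 ≤ n) (hd : d = (n + 2) / 3) (hk : k ≤ d + 1) :
    ∑ j ∈ Finset.range (k + 1),
        (-1 : ℤ) ^ (k - j) * ((d + 1 - j).choose (k - j) : ℤ) * ((n - j + 1).choose j : ℤ)
      ≤ ((2 * n / 3 + k - 2).choose k : ℤ) := by
  subst hd
  have h := (main_claims n).1 hn k
  unfold UQ at h
  unfold Sfun at h
  rw [show 2 * n / 3 + k - 2 = (n + k) - ((n+2)/3 + 2) from by omega]
  exact h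
end

section
/- Let n ≥ 3 and d = ⌈(n-1)/3⌉. Then for all 0 ≤ k ≤ d, ∑_{j=0}^{k} (-1)^{k-j} binom(d-j, k-j) binom(n-j+1, j) ≥ ∑_{j=2}^{k} (-1)^{k-j} binom(d-j, k-j) binom(n-j+1, j-2). -/
def aa (n j : ℕ) : ℤ :=
  ((n - j + 1).choose j : ℤ) - if 2 ≤ j then ((n - j + 1).choose (j - 2) : ℤ) else 0

def TT (n d k : ℕ) : ℤ :=
  ∑ j ∈ Finset.range (k + 1),
    (-1 : ℤ) ^ (k - j) * ((d - j).choose (k - j) : ℤ) * aa n j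

lemma choose_pascal (m j : ℕ) (hj : 1 ≤ j) :
    (m + 1).choose j = m.choose (j - 1) + m.choose j := by
  obtain ⟨i, rfl⟩ : ∃ i, j = i + 1 := ⟨j - 1, by omega⟩
  simp [Nat.choose_succ_succ]

lemma aa_zero (n : ℕ) : aa n 0 = 1 := by simp [aa]

lemma aa_rec (n j : ℕ) (h1 : 1 ≤ j) (h2 : j + 2 ≤ n) :
    aa n j = aa (n - 1) j + aa (n - 2) (j - 1) := by
  obtain ⟨m, hm2, rfl⟩ : ∃ m, 2 ≤ m ∧ n = j + m := ⟨n - j, by omega, by omega⟩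
  simp only [aa]
  rw [show j + m - j + 1 = m + 1 from by omega,
      show j + m - 1 - j + 1 = m from by omega,
      show j + m - 2 - (j - 1) + 1 = m from by omega]
  rcases (by omega : j = 1 ∨ j = 2 ∨ 3 ≤ j) with rfl | rfl | h3
  · norm_num [Nat.choose_one_right]
  · have := choose_pascal m 2 (by omega)
    norm_num
    push_cast [this, Nat.choose_one_right]; ring
  · rw [if_pos (by omega : 2 ≤ j), if_pos (by omega : 2 ≤ j), if_pos (by omega : 2 ≤ j - 1)]
    have hp1 := choose_pascal m j (by omega)
    have hp2 := choose_pascal m (j - 2) (by omega)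
    rw [show j - 1 - 2 = j - 2 - 1 from by omega]
    push_cast [hp1, hp2]; ring

lemma TT_zero (n d : ℕ) : TT n d 0 = 1 := by simp [TT, aa]

lemma TT_rec (n d k : ℕ) (hk : 1 ≤ k) (hkn : k + 2 ≤ n) :
    TT n d k = TT (n - 1) d k + TT (n - 2) (d - 1) (k - 1) := by
  obtain ⟨k', rfl⟩ : ∃ k', k = k' + 1 := ⟨k - 1, by omega⟩
  have L : ∀ m : ℕ,
      TT m d (k' + 1) =
        (∑ i ∈ Finset.range (k' + 1),
          (-1 : ℤ) ^ (k' - i) * ((d - 1 - i).choose (k' - i) : ℤ) * aa m (i + 1))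
        + (-1 : ℤ) ^ (k' + 1) * ((d).choose (k' + 1) : ℤ) * aa m 0 := by
    intro m
    rw [TT, Finset.sum_range_succ']
    congr 1
    apply Finset.sum_congr rfl
    intro i _
    rw [show k' + 1 - (i + 1) = k' - i from by omega,
        show d - (i + 1) = d - 1 - i from by omega]
  rw [L, L (n - 1)]
  rw [show k' + 1 - 1 = k' from by omega]
  have hsum : (∑ i ∈ Finset.range (k' + 1),
      (-1 : ℤ) ^ (k' - i) * ((d - 1 - i).choose (k' - i) : ℤ) * aa n (i + 1)) =
      (∑ i ∈ Finset.range (k' + 1),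
      (-1 : ℤ) ^ (k' - i) * ((d - 1 - i).choose (k' - i) : ℤ) * aa (n - 1) (i + 1))
      + TT (n - 2) (d - 1) k' := by
    rw [TT, ← Finset.sum_add_distrib]
    apply Finset.sum_congr rfl
    intro i hi
    simp only [Finset.mem_range] at hi
    have := aa_rec n (i + 1) (by omega) (by omega)
    rw [this, show i + 1 - 1 = i from by omega]
    ring
  rw [hsum, aa_zero, aa_zero]
  ring

lemma TT_pascal (n d k : ℕ) (hk1 : 1 ≤ k) (hkd : k ≤ d) :
    TT n d k = TT n (d - 1) k - TT n (d - 1) (k - 1) := by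
  obtain ⟨k', rfl⟩ : ∃ k', k = k' + 1 := ⟨k - 1, by omega⟩
  rw [show k' + 1 - 1 = k' from by omega]
  have h1 : (∑ j ∈ Finset.range (k' + 1),
      (-1 : ℤ) ^ (k' + 1 - j) * ((d - j).choose (k' + 1 - j) : ℤ) * aa n j) =
      (∑ j ∈ Finset.range (k' + 1),
      (-1 : ℤ) ^ (k' + 1 - j) * ((d - 1 - j).choose (k' + 1 - j) : ℤ) * aa n j)
      - ∑ j ∈ Finset.range (k' + 1),
      (-1 : ℤ) ^ (k' - j) * ((d - 1 - j).choose (k' - j) : ℤ) * aa n j := by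
    rw [← Finset.sum_sub_distrib]
    apply Finset.sum_congr rfl
    intro j hj
    simp only [Finset.mem_range] at hj
    have hpas : (d - j).choose (k' + 1 - j) =
        (d - 1 - j).choose (k' - j) + (d - 1 - j).choose (k' + 1 - j) := by
      rw [show d - j = (d - 1 - j) + 1 from by omega,
          show k' + 1 - j = (k' - j) + 1 from by omega]
      exact Nat.choose_succ_succ _ _
    have hsgn : (-1 : ℤ) ^ (k' + 1 - j) = -(-1 : ℤ) ^ (k' - j) := by
      rw [show k' + 1 - j = (k' - j) + 1 from by omega]
      ring
    push_cast [hpas]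
    rw [hsgn]
    ring
  conv_lhs => rw [TT, Finset.sum_range_succ, Nat.sub_self]
  conv_rhs => rw [TT, Finset.sum_range_succ, Nat.sub_self, TT]
  rw [h1]
  simp only [Nat.choose_zero_right, pow_zero]
  push_cast
  ring

lemma TT_top (n d : ℕ) : TT n d (d + 1) = aa n (d + 1) := by
  rw [TT, Finset.sum_range_succ, Nat.sub_self]
  have hz : (∑ j ∈ Finset.range (d + 1),
      (-1 : ℤ) ^ (d + 1 - j) * ((d - j).choose (d + 1 - j) : ℤ) * aa n j) = 0 := by
    apply Finset.sum_eq_zero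
    intro j hj
    simp only [Finset.mem_range] at hj
    rw [Nat.choose_eq_zero_of_lt (by omega)]
    push_cast; ring
  rw [hz]
  norm_num

lemma TT_pred (m D : ℕ) (h : ∀ k ≤ D, 0 ≤ TT m D k) :
    ∀ k, k + 1 ≤ D → 0 ≤ TT m (D - 1) k := by
  intro k
  induction k with
  | zero => intro _; rw [TT_zero]; norm_num
  | succ k ih =>
    intro hk
    have hp := TT_pascal m D (k + 1) (by omega) (by omega)
    rw [show k + 1 - 1 = k from by omega] at hp
    have h1 := h (k + 1) (by omega)
    have h2 := ih (by omega)
    linarith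

lemma TT_pos : ∀ n, 3 ≤ n → ∀ k, k ≤ (n + 1) / 3 → 0 ≤ TT n ((n + 1) / 3) k := by
  intro n
  induction n using Nat.strong_induction_on with
  | _ n IH =>
  intro hn k hk
  by_cases hsmall : n ≤ 8
  · interval_cases n <;> (norm_num at hk ⊢) <;> interval_cases k <;> decide
  push_neg at hsmall
  rcases Nat.eq_zero_or_pos k with rfl | hk1
  · rw [TT_zero]; norm_num
  set d := (n + 1) / 3 with hdd
  have hkn : k + 2 ≤ n := by omega
  have hrec := TT_rec n d k hk1 hkn
  rcases (by omega : n % 3 = 0 ∨ n % 3 = 1 ∨ n % 3 = 2) with h3 | h3 | h3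
  · have e1 : (n - 1 + 1) / 3 = d := by omega
    have e2 : (n - 2 + 1) / 3 = d - 1 := by omega
    have p1 := IH (n - 1) (by omega) (by omega) k (by omega)
    have p2 := IH (n - 2) (by omega) (by omega) (k - 1) (by omega)
    rw [e1] at p1; rw [e2] at p2
    rw [hrec]; exact add_nonneg p1 p2
  · have e1 : (n - 1 + 1) / 3 = d := by omega
    have e2 : (n - 2 + 1) / 3 = d := by omega
    have p1 := IH (n - 1) (by omega) (by omega) k (by omega)
    rw [e1] at p1
    have hpos2 : ∀ k' ≤ d, 0 ≤ TT (n - 2) d k' := by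
      intro k' hk'
      have := IH (n - 2) (by omega) (by omega) k' (by omega)
      rwa [e2] at this
    have p2 := TT_pred (n - 2) d hpos2 (k - 1) (by omega)
    rw [hrec]; exact add_nonneg p1 p2
  · have e2 : (n - 2 + 1) / 3 = d - 1 := by omega
    have e3 : (n - 3 + 1) / 3 = d - 1 := by omega
    have hd4 : 4 ≤ d := by omega
    have hrec2 := TT_rec (n - 1) d k hk1 (by omega)
    rw [show n - 1 - 1 = n - 2 from by omega, show n - 1 - 2 = n - 3 from by omega] at hrec2
    have hp := TT_pascal (n - 2) d k hk1 (by omega)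
    have hcomb : TT n d k = TT (n - 2) (d - 1) k + TT (n - 3) (d - 1) (k - 1) := by
      rw [hrec, hrec2, hp]; ring
    have p2' := IH (n - 3) (by omega) (by omega) (k - 1) (by omega)
    rw [e3] at p2'
    have p1 : 0 ≤ TT (n - 2) (d - 1) k := by
      rcases Nat.lt_or_ge k d with hlt | hge
      · have := IH (n - 2) (by omega) (by omega) k (by omega)
        rwa [e2] at this
      · have hkd : k = d := by omega
        have htop := TT_top (n - 2) (d - 1)
        rw [show d - 1 + 1 = d from by omega] at htop
        rw [hkd, htop, aa]
        rw [show n - 2 - d + 1 = 2 * d - 2 from by omega, if_pos (by omega : 2 ≤ d)]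
        have hsym : (2 * d - 2).choose d = (2 * d - 2).choose (d - 2) := by
          rw [← Nat.choose_symm (by omega : d - 2 ≤ 2 * d - 2)]
          congr 1
          omega
        rw [hsym]
        simp
    rw [hcomb]; exact add_nonneg p1 p2'

theorem stmt14 (n d k : ℕ) (hn : 3 ≤ n) (hd : d = (n - 1 + 2) / 3) (hk : k ≤ d) :
    ∑ j ∈ Finset.Icc 2 k,
        (-1 : ℤ) ^ (k - j) * ((d - j).choose (k - j) : ℤ) * ((n - j + 1).choose (j - 2) : ℤ)
      ≤ ∑ j ∈ Finset.range (k + 1),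
        (-1 : ℤ) ^ (k - j) * ((d - j).choose (k - j) : ℤ) * ((n - j + 1).choose j : ℤ) := by
  have hd' : d = (n + 1) / 3 := by omega
  have hI : Finset.Icc 2 k = Finset.filter (fun j => 2 ≤ j) (Finset.range (k + 1)) := by
    ext x
    simp only [Finset.mem_Icc, Finset.mem_filter, Finset.mem_range]
    omega
  have hT : TT n d k =
      (∑ j ∈ Finset.range (k + 1),
        (-1 : ℤ) ^ (k - j) * ((d - j).choose (k - j) : ℤ) * ((n - j + 1).choose j : ℤ))
      - ∑ j ∈ Finset.Icc 2 k,
        (-1 : ℤ) ^ (k - j) * ((d - j).choose (k - j) : ℤ) * ((n - j + 1).choose (j - 2) : ℤ) := by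
    rw [hI, Finset.sum_filter, ← Finset.sum_sub_distrib]
    apply Finset.sum_congr rfl
    intro j _
    by_cases h2 : 2 ≤ j
    · simp only [aa, if_pos h2]
      ring
    · simp only [aa, if_neg h2]
      ring
  have hpos := TT_pos n hn k (by omega)
  rw [← hd'] at hpos
  linarith
end

section
/- Let n ≥ 3 and d = n − ⌊n/3⌋ − ⌈n/3⌉. Then for all 2 ≤ k ≤ d+1, ∑_{j=2}^{k} (-1)^{k-j} binom(d+1-j, k-j) binom(n-j+1, j-2) ≥ 0. -/
def U (m a K : ℕ) : ℤ :=
  ∑ i ∈ Finset.range (K + 1),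
    (-1 : ℤ) ^ (K - i) * ((a - i).choose (K - i) : ℤ) * ((m - i).choose i : ℤ)

lemma U_zero (m a : ℕ) : U m a 0 = 1 := by simp [U]

lemma U_top (m a : ℕ) : U m a (a + 1) = ((m - (a + 1)).choose (a + 1) : ℤ) := by
  unfold U
  rw [Finset.sum_range_succ]
  have h1 : ∀ i ∈ Finset.range (a + 1),
      (-1 : ℤ) ^ (a + 1 - i) * ((a - i).choose (a + 1 - i) : ℤ) * ((m - i).choose i : ℤ) = 0 := by
    intro i hi
    simp only [Finset.mem_range] at hi
    have h : (a - i).choose (a + 1 - i) = 0 := Nat.choose_eq_zero_of_lt (by omega)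
    rw [h]; push_cast; ring
  rw [Finset.sum_congr rfl h1]
  simp

lemma U_P1 (m a K : ℕ) (hm : K ≤ m) :
    U (m + 2) (a + 1) (K + 1) = U (m + 1) (a + 1) (K + 1) + U m a K := by
  unfold U
  rw [Finset.sum_range_succ' (n := K + 1), Finset.sum_range_succ' (n := K + 1)]
  have key : ∀ i ∈ Finset.range (K + 1),
      (-1 : ℤ) ^ (K + 1 - (i + 1)) * ((a + 1 - (i + 1)).choose (K + 1 - (i + 1)) : ℤ) *
          ((m + 2 - (i + 1)).choose (i + 1) : ℤ) =
        (-1 : ℤ) ^ (K + 1 - (i + 1)) * ((a + 1 - (i + 1)).choose (K + 1 - (i + 1)) : ℤ) *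
            ((m + 1 - (i + 1)).choose (i + 1) : ℤ) +
          (-1 : ℤ) ^ (K - i) * ((a - i).choose (K - i) : ℤ) * ((m - i).choose i : ℤ) := by
    intro i hi
    simp only [Finset.mem_range] at hi
    have e1 : K + 1 - (i + 1) = K - i := by omega
    have e2 : a + 1 - (i + 1) = a - i := by omega
    have e3 : m + 2 - (i + 1) = (m - i) + 1 := by omega
    have e4 : m + 1 - (i + 1) = m - i := by omega
    rw [e1, e2, e3, e4, Nat.choose_succ_succ]
    push_cast; ring
  rw [Finset.sum_congr rfl key, Finset.sum_add_distrib]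
  simp only [Nat.sub_zero, Nat.choose_zero_right]
  push_cast
  ring

lemma U_P2 (m a K : ℕ) (hK : K ≤ a) :
    U m (a + 1) (K + 1) = U m a (K + 1) - U m a K := by
  unfold U
  rw [Finset.sum_range_succ (n := K + 1), Finset.sum_range_succ (n := K + 1)]
  have elast : (a + 1 - (K + 1)) = a - K := by omega
  have key : ∀ i ∈ Finset.range (K + 1),
      (-1 : ℤ) ^ (K + 1 - i) * ((a + 1 - i).choose (K + 1 - i) : ℤ) * ((m - i).choose i : ℤ) =
        (-1 : ℤ) ^ (K + 1 - i) * ((a - i).choose (K + 1 - i) : ℤ) * ((m - i).choose i : ℤ) -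
          (-1 : ℤ) ^ (K - i) * ((a - i).choose (K - i) : ℤ) * ((m - i).choose i : ℤ) := by
    intro i hi
    simp only [Finset.mem_range] at hi
    have e1 : a + 1 - i = (a - i) + 1 := by omega
    have e2 : K + 1 - i = (K - i) + 1 := by omega
    rw [e1, e2, Nat.choose_succ_succ]
    have e3 : (-1 : ℤ) ^ (K - i + 1) = -(-1 : ℤ) ^ (K - i) := by ring
    push_cast
    rw [e3]; ring
  rw [Finset.sum_congr rfl key]
  rw [Finset.sum_sub_distrib]
  have eA : (K + 1 - (K + 1)) = 0 := by omega
  rw [eA, elast]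
  have eB : (a - K).choose 0 = 1 := Nat.choose_zero_right _
  simp only [eB, Nat.choose_zero_right]
  push_cast
  ring

lemma U_A (m a K : ℕ) (hKa : K + 1 ≤ a) (hm : K + 1 ≤ m) :
    U (m + 3) (a + 1) (K + 2) = U (m + 1) a (K + 2) + U m a (K + 1) := by
  obtain ⟨b, rfl⟩ : ∃ b, a = b + 1 := ⟨a - 1, by omega⟩
  have e1 : U (m + 3) (b + 1 + 1) (K + 1 + 1) =
      U (m + 2) (b + 1 + 1) (K + 1 + 1) + U (m + 1) (b + 1) (K + 1) :=
    U_P1 (m + 1) (b + 1) (K + 1) (by omega)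
  have e2 : U (m + 2) (b + 1 + 1) (K + 1 + 1) =
      U (m + 2) (b + 1) (K + 1 + 1) - U (m + 2) (b + 1) (K + 1) :=
    U_P2 (m + 2) (b + 1) (K + 1) (by omega)
  have e3 : U (m + 2) (b + 1) (K + 1 + 1) =
      U (m + 1) (b + 1) (K + 1 + 1) + U m b (K + 1) :=
    U_P1 m b (K + 1) (by omega)
  have e4 : U (m + 2) (b + 1) (K + 1) = U (m + 1) (b + 1) (K + 1) + U m b K :=
    U_P1 m b K (by omega)
  have e5 : U m (b + 1) (K + 1) = U m b (K + 1) - U m b K :=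
    U_P2 m b K (by omega)
  have g1 : U (m + 3) (b + 1 + 1) (K + 2) = U (m + 3) (b + 1 + 1) (K + 1 + 1) := rfl
  have g2 : U (m + 1) (b + 1) (K + 2) = U (m + 1) (b + 1) (K + 1 + 1) := rfl
  rw [g1, g2]
  linarith [e1, e2, e3, e4, e5]

lemma U_one (m a : ℕ) (h : a + 1 ≤ m) : 0 ≤ U m a 1 := by
  unfold U
  rw [Finset.sum_range_succ, Finset.sum_range_succ, Finset.sum_range_zero]
  simp only [Nat.sub_zero, Nat.sub_self, Nat.choose_zero_right, Nat.choose_one_right,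
    pow_zero, pow_one]
  have h1 : a + 1 ≤ m - 0 := by omega
  have h2 : (a : ℤ) ≤ ((m - 1 : ℕ) : ℤ) := by
    have : a ≤ m - 1 := by omega
    exact_mod_cast this
  have h3 : ((m - 0 : ℕ) : ℤ) = (m : ℤ) := by omega
  push_cast
  nlinarith [h2]

lemma U_nonneg : ∀ a m K : ℕ, K ≤ a + 1 → 3 * a + 1 ≤ m → 0 ≤ U m a K := by
  intro a
  induction a with
  | zero =>
    intro m K hK hm
    interval_cases K
    · rw [U_zero]; norm_num
    · have := U_top m 0
      simp only [Nat.zero_add] at this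
      rw [this]
      positivity
  | succ a ih =>
    intro m K hK hm
    match K, hK with
    | 0, _ => rw [U_zero]; norm_num
    | 1, _ => exact U_one m (a + 1) (by omega)
    | (K'' + 2), hK =>
      by_cases htop : K'' + 2 = (a + 1) + 1
      · rw [htop, U_top]
        positivity
      · have hKa : K'' + 1 ≤ a := by omega
        obtain ⟨m', rfl⟩ : ∃ m', m = m' + 3 := ⟨m - 3, by omega⟩
        rw [U_A m' a K'' hKa (by omega)]
        have h1 := ih (m' + 1) (K'' + 2) (by omega) (by omega)
        have h2 := ih m' (K'' + 1) (by omega) (by omega)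
        linarith

theorem stmt15 (n d k : ℕ) (hn : 3 ≤ n) (hd : d = n - n / 3 - (n + 2) / 3)
    (hk1 : 2 ≤ k) (hk2 : k ≤ d + 1) :
    0 ≤ ∑ j ∈ Finset.Icc 2 k,
        (-1 : ℤ) ^ (k - j) * ((d + 1 - j).choose (k - j) : ℤ) *
          ((n - j + 1).choose (j - 2) : ℤ) := by
  have hdn : 3 * d ≤ n + 1 ∧ d + 2 ≤ n := by omega
  have hconv : (∑ j ∈ Finset.Icc 2 k,
      (-1 : ℤ) ^ (k - j) * ((d + 1 - j).choose (k - j) : ℤ) *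
        ((n - j + 1).choose (j - 2) : ℤ)) = U (n - 1) (d - 1) (k - 2) := by
    rw [← Finset.Ico_add_one_right_eq_Icc, Finset.sum_Ico_eq_sum_range]
    unfold U
    have hk' : k + 1 - 2 = (k - 2) + 1 := by omega
    rw [hk']
    apply Finset.sum_congr rfl
    intro i hi
    simp only [Finset.mem_range] at hi
    have h1 : k - (2 + i) = (k - 2) - i := by omega
    have h2 : d + 1 - (2 + i) = (d - 1) - i := by omega
    have h3 : n - (2 + i) + 1 = (n - 1) - i := by omega
    have h4 : 2 + i - 2 = i := by omega
    rw [h1, h2, h3, h4]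
  rw [hconv]
  exact U_nonneg (d - 1) (n - 1) (k - 2) (by omega) (by omega)
end

section
/- Let n ≥ 3 and d = n − ⌊n/3⌋ − ⌈n/3⌉. Then for all 0 ≤ k ≤ d+1, binom(n-d+k-2, k) − ∑_{j=0}^{k} (-1)^{k-j} binom(d+1-j, k-j) binom(n-j+1, j) ≥ ∑_{j=2}^{k} (-1)^{k-j} binom(d+1-j, k-j) binom(n-j+1, j-2). -/
open Finset

private def Sh (c n d k : ℕ) : ℤ :=
  ∑ j ∈ Icc c k, (-1 : ℤ) ^ (k - j) * ((d + 1 - j).choose (k - j) : ℤ) *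
    ((n - j + 1).choose (j - c) : ℤ)

private lemma pas3 (m s : ℕ) :
    (m + 2).choose (s + 1) = (m + 1).choose s + (m.choose s + m.choose (s + 1)) := by
  rw [show m + 2 = (m + 1) + 1 from rfl, Nat.choose_succ_succ' (m + 1) s,
    Nat.choose_succ_succ' m s]

/-- The key C-step identity. -/
private lemma shId (c n d m : ℕ) (hd : 1 ≤ d) (hck : c ≤ m + 1)
    (hkd : m + 1 ≤ d + 1) (hn : m + 3 ≤ n) :
    Sh c n d (m + 1) = Sh c (n - 2) (d - 1) (m + 1) + Sh c (n - 3) (d - 1) m := by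
  have hicc : Icc c (m + 1) = insert c (Icc (c + 1) (m + 1)) := by
    ext x; simp only [mem_Icc, mem_insert]; omega
  have hnotmem : c ∉ Icc (c + 1) (m + 1) := by simp
  -- Step 1 : split the binomial C(n-j+1, j-c) by double Pascal
  have step1 : Sh c n d (m + 1) =
      (∑ j ∈ Icc c (m + 1), (-1 : ℤ) ^ (m + 1 - j) * ((d + 1 - j).choose (m + 1 - j) : ℤ) *
        ((n - j - 1).choose (j - c) : ℤ))
      + ∑ j ∈ Icc (c + 1) (m + 1), (-1 : ℤ) ^ (m + 1 - j) *
          ((d + 1 - j).choose (m + 1 - j) : ℤ) *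
        (((n - j).choose (j - c - 1) : ℤ) + ((n - j - 1).choose (j - c - 1) : ℤ)) := by
    rw [Sh, hicc, Finset.sum_insert hnotmem, Finset.sum_insert hnotmem]
    have hc0 : ((n - c + 1).choose (c - c) : ℤ) = ((n - c - 1).choose (c - c) : ℤ) := by
      rw [Nat.sub_self, Nat.choose_zero_right, Nat.choose_zero_right]
    rw [hc0]
    have hterm : (∑ j ∈ Icc (c + 1) (m + 1), (-1 : ℤ) ^ (m + 1 - j) *
          ((d + 1 - j).choose (m + 1 - j) : ℤ) * ((n - j + 1).choose (j - c) : ℤ)) =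
        (∑ j ∈ Icc (c + 1) (m + 1), (-1 : ℤ) ^ (m + 1 - j) *
          ((d + 1 - j).choose (m + 1 - j) : ℤ) * ((n - j - 1).choose (j - c) : ℤ))
        + ∑ j ∈ Icc (c + 1) (m + 1), (-1 : ℤ) ^ (m + 1 - j) *
          ((d + 1 - j).choose (m + 1 - j) : ℤ) *
          (((n - j).choose (j - c - 1) : ℤ) + ((n - j - 1).choose (j - c - 1) : ℤ)) := by
      rw [← Finset.sum_add_distrib]
      refine Finset.sum_congr rfl (fun j hj => ?_)
      simp only [mem_Icc] at hj
      have e1 : n - j + 1 = (n - j - 1) + 2 := by omega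
      have e2 : j - c = (j - c - 1) + 1 := by omega
      have e3 : (n - j - 1) + 1 = n - j := by omega
      have hch : (n - j + 1).choose (j - c) =
          (n - j).choose (j - c - 1) + ((n - j - 1).choose (j - c - 1)
            + (n - j - 1).choose (j - c)) := by
        rw [e1, e2, pas3, e3, ← e2]
      rw [hch]
      push_cast
      ring
    rw [hterm]
    ring
  -- Step 2 : split S_A using Pascal on C(d+1-j, m+1-j)
  have step2 : (∑ j ∈ Icc c (m + 1), (-1 : ℤ) ^ (m + 1 - j) *
        ((d + 1 - j).choose (m + 1 - j) : ℤ) * ((n - j - 1).choose (j - c) : ℤ)) =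
      (∑ j ∈ Icc c (m + 1), (-1 : ℤ) ^ (m + 1 - j) * ((d - j).choose (m + 1 - j) : ℤ) *
        ((n - j - 1).choose (j - c) : ℤ))
      + ∑ j ∈ Icc c m, (-1 : ℤ) ^ (m + 1 - j) * ((d - j).choose (m - j) : ℤ) *
        ((n - j - 1).choose (j - c) : ℤ) := by
    rw [Finset.sum_Icc_succ_top hck, Finset.sum_Icc_succ_top hck]
    have htop : ((d + 1 - (m + 1)).choose (m + 1 - (m + 1)) : ℤ) =
        ((d - (m + 1)).choose (m + 1 - (m + 1)) : ℤ) := by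
      rw [Nat.sub_self, Nat.choose_zero_right, Nat.choose_zero_right]
    rw [htop]
    have hrest : (∑ j ∈ Icc c m, (-1 : ℤ) ^ (m + 1 - j) *
          ((d + 1 - j).choose (m + 1 - j) : ℤ) * ((n - j - 1).choose (j - c) : ℤ)) =
        (∑ j ∈ Icc c m, (-1 : ℤ) ^ (m + 1 - j) * ((d - j).choose (m + 1 - j) : ℤ) *
          ((n - j - 1).choose (j - c) : ℤ))
        + ∑ j ∈ Icc c m, (-1 : ℤ) ^ (m + 1 - j) * ((d - j).choose (m - j) : ℤ) *
          ((n - j - 1).choose (j - c) : ℤ) := by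
      rw [← Finset.sum_add_distrib]
      refine Finset.sum_congr rfl (fun j hj => ?_)
      simp only [mem_Icc] at hj
      have e1 : d + 1 - j = (d - j) + 1 := by omega
      have e2 : m + 1 - j = (m - j) + 1 := by omega
      have hch : (d + 1 - j).choose (m + 1 - j) =
          (d - j).choose (m - j) + (d - j).choose (m + 1 - j) := by
        rw [e1, e2, Nat.choose_succ_succ' (d - j) (m - j), ← e2]
      rw [hch]
      push_cast
      ring
    rw [hrest]
    ring
  -- Step 3 : reindex S_B
  have step3 : (∑ j ∈ Icc (c + 1) (m + 1), (-1 : ℤ) ^ (m + 1 - j) *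
        ((d + 1 - j).choose (m + 1 - j) : ℤ) *
        (((n - j).choose (j - c - 1) : ℤ) + ((n - j - 1).choose (j - c - 1) : ℤ))) =
      (∑ i ∈ Icc c m, (-1 : ℤ) ^ (m - i) * ((d - i).choose (m - i) : ℤ) *
        (((n - i - 1).choose (i - c) : ℤ) + ((n - i - 2).choose (i - c) : ℤ))) := by
    refine Finset.sum_nbij' (fun j => j - 1) (fun i => i + 1) ?_ ?_ ?_ ?_ ?_
    · intro j hj; simp only [mem_Icc] at *; omega
    · intro i hi; simp only [mem_Icc] at *; omega
    · intro j hj; simp only [mem_Icc] at hj; omega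
    · intro i hi; simp only [mem_Icc] at hi; omega
    · intro j hj
      simp only [mem_Icc] at hj
      have e1 : m - (j - 1) = m + 1 - j := by omega
      have e2 : d - (j - 1) = d + 1 - j := by omega
      have e3 : n - (j - 1) - 1 = n - j := by omega
      have e4 : j - 1 - c = j - c - 1 := by omega
      have e5 : n - (j - 1) - 2 = n - j - 1 := by omega
      rw [e1, e2, e3, e4, e5]
  rw [step1, step2, step3]
  -- cancellation
  have cancel : (∑ j ∈ Icc c m, (-1 : ℤ) ^ (m + 1 - j) * ((d - j).choose (m - j) : ℤ) *
        ((n - j - 1).choose (j - c) : ℤ))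
      + (∑ i ∈ Icc c m, (-1 : ℤ) ^ (m - i) * ((d - i).choose (m - i) : ℤ) *
        (((n - i - 1).choose (i - c) : ℤ) + ((n - i - 2).choose (i - c) : ℤ))) =
      ∑ i ∈ Icc c m, (-1 : ℤ) ^ (m - i) * ((d - i).choose (m - i) : ℤ) *
        ((n - i - 2).choose (i - c) : ℤ) := by
    rw [← Finset.sum_add_distrib]
    refine Finset.sum_congr rfl (fun j hj => ?_)
    simp only [mem_Icc] at hj
    have e : m + 1 - j = (m - j) + 1 := by omega
    rw [e, pow_succ]
    ring
  rw [add_assoc, cancel]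
  congr 1
  · rw [Sh]
    refine Finset.sum_congr rfl (fun j hj => ?_)
    simp only [mem_Icc] at hj
    have e1 : d - 1 + 1 - j = d - j := by omega
    have e2 : n - 2 - j + 1 = n - j - 1 := by omega
    rw [e1, e2]
  · rw [Sh]
    refine Finset.sum_congr rfl (fun i hi => ?_)
    simp only [mem_Icc] at hi
    have e1 : d - 1 + 1 - i = d - i := by omega
    have e2 : n - 3 - i + 1 = n - i - 2 := by omega
    rw [e1, e2]

/-- Direct evaluation at `k = d + 2` : only the `j = k` term survives. -/
private lemma shTop (c n d : ℕ) (hc : c ≤ d + 2) (hn : d + 2 ≤ n) :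
    Sh c n d (d + 2) = ((n - d - 1).choose (d + 2 - c) : ℤ) := by
  rw [Sh]
  have hsplit : Icc c (d + 2) = insert (d + 2) (Icc c (d + 1)) := by
    ext x; simp only [mem_Icc, mem_insert]; omega
  rw [hsplit, Finset.sum_insert (by simp)]
  have hzero : (∑ j ∈ Icc c (d + 1), (-1 : ℤ) ^ (d + 2 - j) *
      ((d + 1 - j).choose (d + 2 - j) : ℤ) * ((n - j + 1).choose (j - c) : ℤ)) = 0 := by
    refine Finset.sum_eq_zero (fun j hj => ?_)
    simp only [mem_Icc] at hj
    have : (d + 1 - j).choose (d + 2 - j) = 0 := Nat.choose_eq_zero_of_lt (by omega)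
    rw [this]
    push_cast
    ring
  rw [hzero, add_zero]
  have e : n - (d + 2) + 1 = n - d - 1 := by omega
  rw [Nat.sub_self, pow_zero, Nat.choose_zero_right, e]
  push_cast
  ring

/-- The central inequality. -/
private lemma mainIneq : ∀ n d k : ℕ, 3 * d ≤ n + 1 → k ≤ d + 1 →
    Sh 0 n d k + Sh 2 n d k ≤ ((n - d + k - 2).choose k : ℤ) := by
  intro n
  induction n using Nat.strong_induction_on with
  | _ n IH =>
    intro d k h3 hk
    match k, hk with
    | 0, _ =>
      have h0 : Sh 0 n d 0 = 1 := by rw [Sh]; simp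
      have h2 : Sh 2 n d 0 = 0 := by
        rw [Sh, Finset.Icc_eq_empty (by omega), Finset.sum_empty]
      rw [h0, h2, Nat.choose_zero_right]
      norm_num
    | 1, _ =>
      have h2 : Sh 2 n d 1 = 0 := by
        rw [Sh, Finset.Icc_eq_empty (by omega), Finset.sum_empty]
      have h0 : Sh 0 n d 1 = -((d : ℤ) + 1) + ((n - 1 + 1 : ℕ) : ℤ) := by
        rw [Sh, show Icc 0 1 = {0, 1} from rfl, Finset.sum_insert (by simp),
          Finset.sum_singleton]
        simp [Nat.choose_one_right]
      rw [h0, h2, Nat.choose_one_right]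
      omega
    | (k + 2), hk =>
      have hd1 : 1 ≤ d := by omega
      by_cases hn5 : n ≤ 5
      · have hn2 : 2 ≤ n := by omega
        have hdu : d ≤ 2 := by omega
        have hku : k ≤ 1 := by omega
        interval_cases n <;> interval_cases d <;> interval_cases k <;>
          first
          | omega
          | decide
      · push_neg at hn5
        have hkn : k + 1 + 3 ≤ n := by omega
        have hid0 := shId 0 n d (k + 1) hd1 (by omega) (by omega) hkn
        have hid2 := shId 2 n d (k + 1) hd1 (by omega) (by omega) hkn
        rw [hid0, hid2]
        have hch2 : Sh 0 (n - 3) (d - 1) (k + 1) + Sh 2 (n - 3) (d - 1) (k + 1) ≤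
            (((n - 3) - (d - 1) + (k + 1) - 2).choose (k + 1) : ℤ) :=
          IH (n - 3) (by omega) (d - 1) (k + 1) (by omega) (by omega)
        have hch1 : Sh 0 (n - 2) (d - 1) (k + 2) + Sh 2 (n - 2) (d - 1) (k + 2) ≤
            (((n - 2) - (d - 1) + (k + 2) - 2).choose (k + 2) : ℤ) := by
          by_cases hkd : k + 2 ≤ d
          · exact IH (n - 2) (by omega) (d - 1) (k + 2) (by omega) (by omega)
          · -- k + 2 = d + 1
            have hKd : k + 2 = (d - 1) + 2 := by omega
            rw [hKd, shTop 0 (n - 2) (d - 1) (by omega) (by omega),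
              shTop 2 (n - 2) (d - 1) (by omega) (by omega)]
            have e1 : n - 2 - (d - 1) - 1 = n - d - 2 := by omega
            have e2 : (d - 1) + 2 - 0 = d + 1 := by omega
            have e3 : (d - 1) + 2 - 2 = d - 1 := by omega
            have e4 : n - 2 - (d - 1) + ((d - 1) + 2) - 2 = n - 2 := by omega
            have e5 : (d - 1) + 2 = d + 1 := by omega
            rw [e1, e2, e3, e4, e5]
            have hnat : (n - d - 2).choose (d + 1) + (n - d - 2).choose (d - 1) ≤
                (n - 2).choose (d + 1) := by
              by_cases hd2 : 2 ≤ d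
              · have h1 : (n - d - 2).choose (d + 1) + (n - d - 2).choose (d - 1) ≤
                    (n - d).choose (d + 1) := by
                  have ea : (n - d - 2) + 1 + 1 = n - d := by omega
                  have hA := Nat.choose_succ_succ' (n - d - 2) d
                  have hB := Nat.choose_succ_succ' (n - d - 2) (d - 1)
                  have ed : (d - 1) + 1 = d := by omega
                  rw [ed] at hB
                  have hC := Nat.choose_succ_succ' ((n - d - 2) + 1) d
                  have key : ((n - d - 2) + 1 + 1).choose (d + 1) = (n - d).choose (d + 1) := by
                    rw [ea]
                  rw [← key]
                  omega
                exact le_trans h1 (Nat.choose_le_choose (d + 1) (by omega))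
              · have hd1' : d = 1 := by omega
                subst hd1'
                rw [show n - 1 - 2 = n - 3 from by omega,
                  show (1 : ℕ) - 1 = 0 from rfl,
                  show n - 2 = (n - 3) + 1 from by omega,
                  Nat.choose_succ_succ' (n - 3) 1,
                  Nat.choose_zero_right, Nat.choose_one_right]
                omega
            exact_mod_cast hnat
        have hB : (((n - 2) - (d - 1) + (k + 2) - 2).choose (k + 2) : ℤ)
            + (((n - 3) - (d - 1) + (k + 1) - 2).choose (k + 1) : ℤ)
            ≤ ((n - d + (k + 2) - 2).choose (k + 2) : ℤ) := by
          have e1 : (n - 2) - (d - 1) + (k + 2) - 2 = n - d + k - 1 := by omega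
          have e2 : (n - 3) - (d - 1) + (k + 1) - 2 = n - d + k - 3 := by omega
          have e3 : n - d + (k + 2) - 2 = n - d + k := by omega
          rw [e1, e2, e3]
          have hmono : (n - d + k - 3).choose (k + 1) ≤ (n - d + k - 1).choose (k + 1) :=
            Nat.choose_le_choose (k + 1) (by omega)
          have hpas : (n - d + k).choose (k + 2) =
              (n - d + k - 1).choose (k + 1) + (n - d + k - 1).choose (k + 2) := by
            have h := Nat.choose_succ_succ' (n - d + k - 1) (k + 1)
            rw [show (n - d + k - 1) + 1 = n - d + k from by omega,
              show (k + 1) + 1 = k + 2 from rfl] at h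
            exact h
          have : (n - d + k - 1).choose (k + 2) + (n - d + k - 3).choose (k + 1) ≤
              (n - d + k).choose (k + 2) := by omega
          exact_mod_cast this
        linarith [hch1, hch2, hB]

theorem stmt16 (n d k : ℕ) (hn : 3 ≤ n) (hd : d = n - n / 3 - (n + 2) / 3) (hk : k ≤ d + 1) :
    ∑ j ∈ Finset.Icc 2 k,
        (-1 : ℤ) ^ (k - j) * ((d + 1 - j).choose (k - j) : ℤ) * ((n - j + 1).choose (j - 2) : ℤ)
      ≤ ((n - d + k - 2).choose k : ℤ)
        - ∑ j ∈ Finset.range (k + 1),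
            (-1 : ℤ) ^ (k - j) * ((d + 1 - j).choose (k - j) : ℤ) *
              ((n - j + 1).choose j : ℤ) := by
  have h3 : 3 * d ≤ n + 1 := by omega
  have hmain := mainIneq n d k h3 hk
  have e0 : (∑ j ∈ Finset.range (k + 1),
      (-1 : ℤ) ^ (k - j) * ((d + 1 - j).choose (k - j) : ℤ) * ((n - j + 1).choose j : ℤ))
      = Sh 0 n d k := by
    rw [Sh, show Finset.range (k + 1) = Finset.Icc 0 k from by ext x; simp]
    refine Finset.sum_congr rfl (fun j hj => ?_)
    rw [Nat.sub_zero]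
  have e2 : (∑ j ∈ Finset.Icc 2 k,
      (-1 : ℤ) ^ (k - j) * ((d + 1 - j).choose (k - j) : ℤ) * ((n - j + 1).choose (j - 2) : ℤ))
      = Sh 2 n d k := rfl
  rw [e2, e0]
  linarith
end
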